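/- Let Y₁, …, Y_n be linearly ordered sets and for each i let A_i be a finite subset of Y_i containing the minimum and maximum of Y_i (assumed to exist). Let 𝒱_i be the collection of all nonempty closed intervals [a,b] ⊆ Y_i with a, b ∈ A_i and a ≤ b, and 𝒲 = {V₁ × ⋯ × V_n : V_i ∈ 𝒱_i}. Then every point y ∈ Y₁ × ⋯ × Y_n lies in some W ∈ 𝒲, and moreover the union of all W ∈ 𝒲 containing y is a neighborhood of y in the product of the order topologies. -/
import Mathlib


open Set Filter Topology

/-- Oscillation of a real-valued function on a set. -/
noncomputable def osc {α : Type*} (f : α → ℝ) (A : Set α) : ℝ :=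
  sSup {d : ℝ | ∃ x ∈ A, ∃ y ∈ A, d = |f x - f y|}

/-- Oscillation of a real-valued function at a point. -/
noncomputable def oscAt {α : Type*} [TopologicalSpace α] (f : α → ℝ) (a : α) : ℝ :=
  sInf {d : ℝ | ∃ U ∈ nhds a, d = osc f U}
lemma oneDimIcc {Y : Type*} [LinearOrder Y] [TopologicalSpace Y] [OrderTopology Y]
    [BoundedOrder Y] (A : Finset Y) (hbot : (⊥ : Y) ∈ A) (htop : (⊤ : Y) ∈ A) (y : Y) :
    ∃ p q : Y, p ∈ A ∧ q ∈ A ∧ p ≤ y ∧ y ≤ q ∧ Set.Icc p q ∈ nhds y := by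
  classical
  obtain ⟨p, hpA, hpy, hp⟩ : ∃ p, p ∈ A ∧ p ≤ y ∧ (p < y ∨ y = ⊥) := by
    by_cases h : (A.filter (· < y)).Nonempty
    · refine ⟨(A.filter (· < y)).max' h, ?_, ?_, Or.inl ?_⟩
      · exact (Finset.mem_filter.mp ((A.filter (· < y)).max'_mem h)).1
      · exact le_of_lt (by simpa using (Finset.mem_filter.mp ((A.filter (· < y)).max'_mem h)).2)
      · simpa using (Finset.mem_filter.mp ((A.filter (· < y)).max'_mem h)).2
    · refine ⟨⊥, hbot, bot_le, Or.inr ?_⟩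
      by_contra hy
      exact h ⟨⊥, Finset.mem_filter.mpr ⟨hbot, bot_le.lt_of_ne (Ne.symm hy)⟩⟩
  obtain ⟨q, hqA, hyq, hq⟩ : ∃ q, q ∈ A ∧ y ≤ q ∧ (y < q ∨ y = ⊤) := by
    by_cases h : (A.filter (y < ·)).Nonempty
    · refine ⟨(A.filter (y < ·)).min' h, ?_, ?_, Or.inl ?_⟩
      · exact (Finset.mem_filter.mp ((A.filter (y < ·)).min'_mem h)).1
      · exact le_of_lt (by simpa using (Finset.mem_filter.mp ((A.filter (y < ·)).min'_mem h)).2)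
      · simpa using (Finset.mem_filter.mp ((A.filter (y < ·)).min'_mem h)).2
    · refine ⟨⊤, htop, le_top, Or.inr ?_⟩
      by_contra hy
      exact h ⟨⊤, Finset.mem_filter.mpr ⟨htop, le_top.lt_of_ne hy⟩⟩
  refine ⟨p, q, hpA, hqA, hpy, hyq, ?_⟩
  rcases hp with hp | hp
  · rcases hq with hq | hq
    · exact Icc_mem_nhds hp hq
    · exact Filter.mem_of_superset (Ioi_mem_nhds hp)
        (fun z hz => ⟨hz.le, le_top.trans (hq.ge.trans hyq)⟩)
  · rcases hq with hq | hq
    · exact Filter.mem_of_superset (Iio_mem_nhds hq)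
        (fun z hz => ⟨(hpy.trans hp.le).trans bot_le, hz.le⟩)
    · exact Filter.mem_of_superset Filter.univ_mem
        (fun z _ => ⟨(hpy.trans hp.le).trans bot_le, le_top.trans (hq.ge.trans hyq)⟩)

theorem stmt14 {n : ℕ} (Y : Fin n → Type*) [∀ i, LinearOrder (Y i)]
    [∀ i, TopologicalSpace (Y i)] [∀ i, OrderTopology (Y i)] [∀ i, BoundedOrder (Y i)]
    (A : ∀ i, Finset (Y i)) (hA : ∀ i, (⊥ : Y i) ∈ A i ∧ (⊤ : Y i) ∈ A i)
    (y : ∀ i, Y i) :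
    (∃ a b : ∀ i, Y i, (∀ i, a i ∈ A i ∧ b i ∈ A i ∧ a i ≤ b i) ∧
      ∀ i, y i ∈ Set.Icc (a i) (b i)) ∧
    (⋃ W ∈ {W : Set (∀ i, Y i) | ∃ a b : ∀ i, Y i,
        (∀ i, a i ∈ A i ∧ b i ∈ A i ∧ a i ≤ b i) ∧
        W = {z | ∀ i, z i ∈ Set.Icc (a i) (b i)} ∧ y ∈ W}, W) ∈ nhds y := by
  choose p q hpA hqA hpy hyq hnhds using fun i => oneDimIcc (A i) (hA i).1 (hA i).2 (y i)
  constructor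
  · exact ⟨fun _ => ⊥, fun _ => ⊤, fun i => ⟨(hA i).1, (hA i).2, bot_le⟩,
      fun i => ⟨bot_le, le_top⟩⟩
  · refine Filter.mem_of_superset (set_pi_mem_nhds Set.finite_univ fun i _ => hnhds i) ?_
    intro z hz
    exact Set.mem_biUnion
      ⟨p, q, fun i => ⟨hpA i, hqA i, (hpy i).trans (hyq i)⟩, rfl,
        fun i => ⟨hpy i, hyq i⟩⟩
      (fun i => hz i (Set.mem_univ i))
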